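/- If K is a pure 2-dimensional shellable simplicial complex, then the link of every vertex of K is connected. -/

import Mathlib

open scoped Classical

/-- `K` is an abstract simplicial complex: a collection of finite sets
closed under taking subsets. -/
def IsComplex {V : Type*} (K : Finset (Finset V)) : Prop :=
  ∀ σ ∈ K, ∀ τ ⊆ σ, τ ∈ K

/-- `σ` is a facet (inclusion-maximal face) of `K`. -/
def IsFacet {V : Type*} (K : Finset (Finset V)) (σ : Finset V) : Prop :=
  σ ∈ K ∧ ∀ τ ∈ K, σ ⊆ τ → σ = τ

/-- `K` is a (nonempty) pure `d`-dimensional complex: it has a face of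
dimension `d` and every facet has dimension `d` (cardinality `d+1`). -/
def PureDim {V : Type*} (K : Finset (Finset V)) (d : ℕ) : Prop :=
  (∃ σ ∈ K, σ.card = d + 1) ∧ ∀ σ, IsFacet K σ → σ.card = d + 1

/-- The complex `σᵢ ∩ (⋃_{j<i} σⱼ)`: faces of the `i`-th member of the
ordering `L` that are contained in some earlier member. -/
noncomputable def shellStep {V : Type*} (L : List (Finset V)) (i : ℕ) (h : i < L.length) :
    Finset (Finset V) :=
  (L.get ⟨i, h⟩).powerset.filter
    (fun τ => ∃ j, ∃ hj : j < L.length, j < i ∧ τ ⊆ L.get ⟨j, hj⟩)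

/-- `L` is a shelling of the pure `d`-dimensional complex `K`: an ordering
(without repetition) of all facets of `K` such that each facet meets the union
of the previous ones in a pure `(d-1)`-dimensional complex. -/
def IsShelling {V : Type*} (K : Finset (Finset V)) (d : ℕ) (L : List (Finset V)) : Prop :=
  L.Nodup ∧ (∀ σ, IsFacet K σ ↔ σ ∈ L) ∧
    ∀ i (h : i < L.length), 1 ≤ i → PureDim (shellStep L i h) (d - 1)

/-- The link of a vertex `v` in `K`:
`lk_K(v) = {σ ∈ K : v ∉ σ and σ ∪ {v} ∈ K}`. -/
noncomputable def vertexLink {V : Type*} [DecidableEq V] (K : Finset (Finset V)) (v : V) :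
    Finset (Finset V) :=
  K.filter (fun σ => v ∉ σ ∧ insert v σ ∈ K)

/-!
Follow a shelling `σ₀, σ₁, …` and show by induction on `i` that all vertices `a ≠ v` sharing one
of `σ₀, …, σ_{i-1}` with `v` lie in one component of the link graph of `v`. When `σᵢ` contains
`v` but is not the first such facet, `{v}` lies in the pure 1-dimensional complex
`σᵢ ∩ (σ₀ ∪ ⋯ ∪ σ_{i-1})`, hence in one of its edges `{v, x}`; so `x` is an old neighbour of `v`
lying in `σᵢ`, and the new vertices of `σᵢ` are joined to `x` inside the simplex `σᵢ`.
-/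

section

variable {V : Type*}

abbrev linkGraph [DecidableEq V] (K : Finset (Finset V)) (v : V) : SimpleGraph V :=
  SimpleGraph.fromRel (fun x y => ({x, y} : Finset V) ∈ vertexLink K v)

theorem exists_isFacet_superset (K : Finset (Finset V)) {σ : Finset V} (hσ : σ ∈ K) :
    ∃ τ, IsFacet K τ ∧ σ ⊆ τ := by
  obtain ⟨τ, hτ, hmax⟩ := (K.filter (σ ⊆ ·)).exists_maximal ⟨σ, by simp [hσ]⟩
  simp only [Finset.mem_filter] at hτ hmax
  refine ⟨τ, ⟨hτ.1, fun ρ hρ hτρ => ?_⟩, hτ.2⟩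
  exact hτρ.antisymm (hmax ⟨hρ, hτ.2.trans hτρ⟩ hτρ)

theorem PureDim.exists_superset_card {K : Finset (Finset V)} {d : ℕ} (hK : PureDim K d)
    {σ : Finset V} (hσ : σ ∈ K) : ∃ τ ∈ K, σ ⊆ τ ∧ τ.card = d + 1 := by
  obtain ⟨τ, hτ, hστ⟩ := exists_isFacet_superset K hσ
  exact ⟨τ, hτ.1, hστ, hK.2 τ hτ⟩

section Link

variable [DecidableEq V] {K : Finset (Finset V)} {v : V}

theorem singleton_mem_vertexLink {a : V} (ha : ({a} : Finset V) ∈ vertexLink K v) :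
    a ≠ v ∧ ({v, a} : Finset V) ∈ K := by
  simp only [vertexLink, Finset.mem_filter, Finset.mem_singleton] at ha
  exact ⟨Ne.symm ha.2.1, ha.2.2⟩

theorem pair_mem_vertexLink (hK : IsComplex K) {σ : Finset V} (hσ : σ ∈ K) {x y : V}
    (hv : v ∈ σ) (hx : x ∈ σ) (hy : y ∈ σ) (hxv : x ≠ v) (hyv : y ≠ v) :
    ({x, y} : Finset V) ∈ vertexLink K v := by
  have hxy : ({x, y} : Finset V) ⊆ σ := Finset.insert_subset hx (Finset.singleton_subset_iff.2 hy)
  simp only [vertexLink, Finset.mem_filter, Finset.mem_insert, Finset.mem_singleton, not_or]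
  exact ⟨hK σ hσ _ hxy, ⟨hxv.symm, hyv.symm⟩, hK σ hσ _ (Finset.insert_subset hv hxy)⟩

theorem linkGraph_reachable_of_mem (hK : IsComplex K) {σ : Finset V} (hσ : σ ∈ K) {x y : V}
    (hv : v ∈ σ) (hx : x ∈ σ) (hy : y ∈ σ) (hxv : x ≠ v) (hyv : y ≠ v) :
    (linkGraph K v).Reachable x y := by
  rcases eq_or_ne x y with rfl | hxy
  · rfl
  · exact SimpleGraph.Adj.reachable
      ((SimpleGraph.fromRel_adj _ x y).2 ⟨hxy, Or.inl (pair_mem_vertexLink hK hσ hv hx hy hxv hyv)⟩)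

end Link

def ShareFacetBefore (L : List (Finset V)) (i : ℕ) (v a : V) : Prop :=
  ∃ j, ∃ hj : j < L.length, j < i ∧ v ∈ L.get ⟨j, hj⟩ ∧ a ∈ L.get ⟨j, hj⟩

theorem ShareFacetBefore.of_succ {L : List (Finset V)} {i : ℕ} {v a : V}
    (h : ShareFacetBefore L (i + 1) v a) :
    ShareFacetBefore L i v a ∨ ∃ hi : i < L.length, v ∈ L.get ⟨i, hi⟩ ∧ a ∈ L.get ⟨i, hi⟩ := by
  obtain ⟨j, hj, hji, hv, ha⟩ := h
  rcases Nat.lt_succ_iff_lt_or_eq.1 hji with hji | rfl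
  · exact Or.inl ⟨j, hj, hji, hv, ha⟩
  · exact Or.inr ⟨hj, hv, ha⟩

theorem ShareFacetBefore.self_left {L : List (Finset V)} {i : ℕ} {v a : V}
    (h : ShareFacetBefore L i v a) : ShareFacetBefore L i v v :=
  let ⟨j, hj, hji, hv, _⟩ := h
  ⟨j, hj, hji, hv, hv⟩

namespace IsShelling

variable {K : Finset (Finset V)} {d : ℕ} {L : List (Finset V)}

theorem get_mem (hs : IsShelling K d L) (j : ℕ) (hj : j < L.length) : L.get ⟨j, hj⟩ ∈ K :=
  ((hs.2.1 _).2 (List.get_mem L ⟨j, hj⟩)).1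

theorem exists_get_superset (hs : IsShelling K d L) {σ : Finset V} (hσ : σ ∈ K) :
    ∃ j, ∃ hj : j < L.length, σ ⊆ L.get ⟨j, hj⟩ := by
  obtain ⟨τ, hτ, hστ⟩ := exists_isFacet_superset K hσ
  obtain ⟨⟨j, hj⟩, rfl⟩ := List.mem_iff_get.1 ((hs.2.1 τ).1 hτ)
  exact ⟨j, hj, hστ⟩

theorem exists_shareFacetBefore_of_mem (hs : IsShelling K d L) (hd : 2 ≤ d) {v : V} {i : ℕ}
    (hi : i < L.length) (hvi : v ∈ L.get ⟨i, hi⟩) (hv : ShareFacetBefore L i v v) :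
    ∃ x, x ≠ v ∧ x ∈ L.get ⟨i, hi⟩ ∧ ShareFacetBefore L i v x := by
  obtain ⟨j, hj, hji, hvj, -⟩ := hv
  have hvstep : ({v} : Finset V) ∈ shellStep L i hi := by
    simp only [shellStep, Finset.mem_filter, Finset.mem_powerset, Finset.singleton_subset_iff]
    exact ⟨hvi, j, hj, hji, hvj⟩
  obtain ⟨τ, hτ, hvτ, hcard⟩ := (hs.2.2 i hi (by omega)).exists_superset_card hvstep
  simp only [shellStep, Finset.mem_filter, Finset.mem_powerset] at hτ
  obtain ⟨hτi, j', hj', hj'i, hτj'⟩ := hτ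
  rw [Finset.singleton_subset_iff] at hvτ
  obtain ⟨x, hx⟩ : (τ.erase v).Nonempty := by
    rw [← Finset.card_pos, Finset.card_erase_of_mem hvτ]
    omega
  rw [Finset.mem_erase] at hx
  exact ⟨x, hx.1, hτi hx.2, j', hj', hj'i, hτj' hvτ, hτj' hx.2⟩

theorem linkGraph_reachable_of_shareFacetBefore [DecidableEq V] (hK : IsComplex K)
    (hs : IsShelling K d L) (hd : 2 ≤ d) {v : V} (i : ℕ) {a b : V} (hav : a ≠ v) (hbv : b ≠ v)
    (ha : ShareFacetBefore L i v a) (hb : ShareFacetBefore L i v b) :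
    (linkGraph K v).Reachable a b := by
  induction i generalizing a b with
  | zero => obtain ⟨j, -, hj, -⟩ := ha; omega
  | succ i ih =>
    have reachable_of_new_of_old : ∀ {a b : V}, a ≠ v → b ≠ v → (hi : i < L.length) →
        v ∈ L.get ⟨i, hi⟩ → a ∈ L.get ⟨i, hi⟩ → ShareFacetBefore L i v b →
        (linkGraph K v).Reachable a b := by
      intro a b hav hbv hi hvi hai hb
      obtain ⟨x, hxv, hxi, hx⟩ := hs.exists_shareFacetBefore_of_mem hd hi hvi hb.self_left
      exact (linkGraph_reachable_of_mem hK (hs.get_mem i hi) hvi hai hxi hav hxv).trans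
        (ih hxv hbv hx hb)
    rcases ha.of_succ with ha | ⟨hi, hvi, hai⟩ <;> rcases hb.of_succ with hb | ⟨hi', hvi', hbi⟩
    · exact ih hav hbv ha hb
    · exact (reachable_of_new_of_old hbv hav hi' hvi' hbi ha).symm
    · exact reachable_of_new_of_old hav hbv hi hvi hai hb
    · exact linkGraph_reachable_of_mem hK (hs.get_mem i hi) hvi hai hbi hav hbv

end IsShelling

end

theorem shellable_links_connected_general {V : Type*} [DecidableEq V]
    (K : Finset (Finset V)) (hK : IsComplex K)
    (hshell : ∃ L, IsShelling K 2 L) (v : V) :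
    ∀ a b : V, ({a} : Finset V) ∈ vertexLink K v → ({b} : Finset V) ∈ vertexLink K v →
      (SimpleGraph.fromRel
          (fun x y => ({x, y} : Finset V) ∈ vertexLink K v)).Reachable a b := by
  obtain ⟨L, hs⟩ := hshell
  have share : ∀ c, ({c} : Finset V) ∈ vertexLink K v → ShareFacetBefore L L.length v c := by
    intro c hc
    obtain ⟨j, hj, hsub⟩ := hs.exists_get_superset (singleton_mem_vertexLink hc).2
    exact ⟨j, hj, hj, hsub (by simp), hsub (by simp)⟩
  intro a b ha hb
  exact hs.linkGraph_reachable_of_shareFacetBefore hK le_rfl L.length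
    (singleton_mem_vertexLink ha).1 (singleton_mem_vertexLink hb).1 (share a ha) (share b hb)

/-- in a pure 2-dimensional shellable complex, the link of every
vertex is a connected graph. -/
theorem shellable_links_connected {V : Type*} [DecidableEq V]
    (K : Finset (Finset V)) (hK : IsComplex K) (hpure : PureDim K 2)
    (hshell : ∃ L, IsShelling K 2 L) (v : V) (hv : ({v} : Finset V) ∈ K) :
    ∀ a b : V, ({a} : Finset V) ∈ vertexLink K v → ({b} : Finset V) ∈ vertexLink K v →
      (SimpleGraph.fromRel
          (fun x y => ({x, y} : Finset V) ∈ vertexLink K v)).Reachable a b :=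
  shellable_links_connected_general K hK hshell v
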